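/- arXiv:2107.00433 — 3 statements merged into one kernel-verified Lean document; each statement's English description precedes it below -/
import Mathlib

section
/- Let E be a finite-dimensional real inner product space, T > 0, and F : E → [0,∞] (extended nonnegative reals) convex, lower semicontinuous, with F(0) = 0. Let v : ℝ → E be Bochner integrable, supported in [0,T], with ∫₀^T F(v(t)) dt < ∞. For h > 0 set η_h(t) = h⁻¹·1_{[−h,0]}(t) and η_{−h}(t) = h⁻¹·1_{[0,h]}(t), and for ε > 0 let ξ_ε : ℝ → [0,1] be a continuous function supported in (0,T) with ξ_ε = 1 on [ε, T − ε]. Define the regularization [v]_{h,ε}(t) = ξ_ε(t)·(η_{−h} * η_h * (ξ_ε v))(t). Then: (i) for every h, ε > 0, ∫₀^T F([v]_{h,ε}(t)) dt ≤ ∫₀^T F(ξ_ε(t) v(t)) dt; and (ii) ∫₀^T F(ξ_ε(t) v(t)) dt → ∫₀^T F(v(t)) dt as ε → 0. Consequently limsup_{ε→0} sup_{h>0} ∫₀^T F([v]_{h,ε}(t)) dt ≤ ∫₀^T F(v(t)) dt. -/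
/-!
Each of the two Steklov averages is the average of its argument over an interval of length `h`.
Jensen's inequality, which for a lower semicontinuous convex `F` follows from the closedness
and convexity of its epigraph, bounds `F` of the average by the average of `F`; integrating in
`t` and exchanging the order of integration shows that averaging does not increase `∫ F`.
The outer factor `ξ_ε ∈ [0, 1]` can only decrease `F`, since `F` is convex with `F 0 = 0`.
Part (ii) is dominated convergence with dominant `F ∘ v`, because `ξ_ε t = 1` for all small
`ε` at every `t ∈ (0, T)`.
-/

open MeasureTheory Filter Topology
open scoped ENNReal

/-- Convexity for an extended-nonnegative-real-valued function on a real vector space. -/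
def ConvexENN {E : Type*} [AddCommMonoid E] [Module ℝ E] (F : E → ℝ≥0∞) : Prop :=
  ∀ x y : E, ∀ a b : ℝ, 0 ≤ a → 0 ≤ b → a + b = 1 →
    F (a • x + b • y) ≤ ENNReal.ofReal a * F x + ENNReal.ofReal b * F y

/-- Convolution in the time variable: `(η * w)(t) = ∫ η(t − s) w(s) ds`. -/
noncomputable def convT {E : Type*} [NormedAddCommGroup E] [NormedSpace ℝ E]
    (η : ℝ → ℝ) (w : ℝ → E) (t : ℝ) : E :=
  ∫ s, η (t - s) • w s

/-- The mollifier `η_h(t) = h⁻¹ 1_{[−h, 0]}(t)`. -/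
noncomputable def etaP (h t : ℝ) : ℝ := h⁻¹ * Set.indicator (Set.Icc (-h) 0) (fun _ => (1 : ℝ)) t

/-- The mollifier `η_{−h}(t) = h⁻¹ 1_{[0, h]}(t)`. -/
noncomputable def etaM (h t : ℝ) : ℝ := h⁻¹ * Set.indicator (Set.Icc 0 h) (fun _ => (1 : ℝ)) t

/-- The regularization `[v]_{h,ε}(t) = ξ_ε(t) · (η_{−h} * η_h * (ξ_ε v))(t)`. -/
noncomputable def reg {E : Type*} [NormedAddCommGroup E] [NormedSpace ℝ E]
    (h : ℝ) (ξ : ℝ → ℝ) (v : ℝ → E) (t : ℝ) : E :=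
  ξ t • convT (etaM h) (convT (etaP h) (fun r => ξ r • v r)) t

open Set

section Convexity

variable {E : Type*} [AddCommMonoid E] [Module ℝ E] {F : E → ℝ≥0∞}

theorem ConvexENN.apply_smul_le (hconv : ConvexENN F) (hF0 : F 0 = 0) {a : ℝ}
    (ha : a ∈ Icc (0 : ℝ) 1) (x : E) : F (a • x) ≤ F x := by
  have h := hconv x 0 a (1 - a) ha.1 (by linarith [ha.2]) (by ring)
  rw [smul_zero, add_zero, hF0, mul_zero, add_zero] at h
  calc F (a • x) ≤ ENNReal.ofReal a * F x := h
    _ ≤ 1 * F x := by gcongr; exact ENNReal.ofReal_le_one.mpr ha.2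
    _ = F x := one_mul _

-- `0 ≤ p.2` cannot be dropped: `ENNReal.ofReal` truncates negative reals, and without it the
-- set is not convex.
theorem ConvexENN.convex_epigraph (hconv : ConvexENN F) :
    Convex ℝ {p : E × ℝ | 0 ≤ p.2 ∧ F p.1 ≤ ENNReal.ofReal p.2} := by
  rintro ⟨x, r⟩ ⟨hr, hx⟩ ⟨y, s⟩ ⟨hs, hy⟩ a b ha hb hab
  simp only [Prod.smul_mk, Prod.mk_add_mk, smul_eq_mul, mem_ofPred_eq] at hr hs hx hy ⊢
  refine ⟨by positivity, ?_⟩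
  calc F (a • x + b • y) ≤ ENNReal.ofReal a * F x + ENNReal.ofReal b * F y :=
        hconv x y a b ha hb hab
    _ ≤ ENNReal.ofReal a * ENNReal.ofReal r + ENNReal.ofReal b * ENNReal.ofReal s := by gcongr
    _ = ENNReal.ofReal (a * r + b * s) := by
        rw [ENNReal.ofReal_add (by positivity) (by positivity), ENNReal.ofReal_mul ha,
          ENNReal.ofReal_mul hb]

end Convexity

theorem LowerSemicontinuous.isClosed_ofReal_epigraph {E : Type*} [TopologicalSpace E]
    {F : E → ℝ≥0∞} (hlsc : LowerSemicontinuous F) :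
    IsClosed {p : E × ℝ | 0 ≤ p.2 ∧ F p.1 ≤ ENNReal.ofReal p.2} :=
  (isClosed_le continuous_const continuous_snd).inter <| hlsc.isClosed_epigraph.preimage
    (continuous_fst.prodMk (ENNReal.continuous_ofReal.comp continuous_snd))

section Jensen

variable {E : Type*} [NormedAddCommGroup E] [NormedSpace ℝ E] [CompleteSpace E]
  {F : E → ℝ≥0∞} {α : Type*} [MeasurableSpace α] {μ : Measure α} {w : α → E}

theorem ConvexENN.map_average_le [IsFiniteMeasure μ] [NeZero μ] (hconv : ConvexENN F)
    (hlsc : LowerSemicontinuous F) (hw : Integrable w μ) :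
    F (⨍ x, w x ∂μ) ≤ ⨍⁻ x, F (w x) ∂μ := by
  borelize E
  have hFw : AEMeasurable (fun x => F (w x)) μ :=
    hlsc.measurable.comp_aemeasurable hw.aemeasurable
  by_cases htop : ∫⁻ x, F (w x) ∂μ = ∞
  · rw [laverage_eq, htop, ENNReal.top_div_of_ne_top (measure_ne_top μ univ)]
    exact le_top
  have hg : Integrable (fun x => (F (w x)).toReal) μ :=
    integrable_toReal_of_lintegral_ne_top hFw htop
  have hfin : ∀ᵐ x ∂μ, F (w x) ≠ ∞ := (ae_lt_top' hFw htop).mono fun _ => ne_of_lt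
  have hmem := hconv.convex_epigraph.average_mem hlsc.isClosed_ofReal_epigraph
    (hfin.mono fun x hx => ⟨ENNReal.toReal_nonneg, (ENNReal.ofReal_toReal hx).ge⟩) (hw.prodMk hg)
  rw [average_pair hw hg] at hmem
  calc F (⨍ x, w x ∂μ) ≤ ENNReal.ofReal (⨍ x, (F (w x)).toReal ∂μ) := hmem.2
    _ = ⨍⁻ x, F (w x) ∂μ := by
        rw [← toReal_laverage hFw hfin, ENNReal.ofReal_toReal]
        rw [laverage_eq]
        exact ENNReal.div_ne_top htop (NeZero.ne μ ∘ Measure.measure_univ_eq_zero.1)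

theorem ConvexENN.map_setAverage_le {s : Set α} (hconv : ConvexENN F)
    (hlsc : LowerSemicontinuous F) (h0 : μ s ≠ 0) (hs : μ s ≠ ∞) (hw : IntegrableOn w s μ) :
    F (⨍ x in s, w x ∂μ) ≤ ⨍⁻ x in s, F (w x) ∂μ :=
  have := Fact.mk hs.lt_top
  have := NeZero.mk h0
  hconv.map_average_le hlsc hw

end Jensen

section Steklov

theorem setLIntegral_Icc_sub_eq (G : ℝ → ℝ≥0∞) (a b t : ℝ) :
    ∫⁻ s in Icc (t - b) (t - a), G s = ∫⁻ s in Icc a b, G (t - s) := by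
  rw [← lintegral_indicator measurableSet_Icc, ← lintegral_indicator measurableSet_Icc,
    ← lintegral_sub_left_eq_self _ t]
  congr with s
  rw [← indicator_comp_right (fun s => t - s), preimage_const_sub_Icc, sub_sub_cancel,
    sub_sub_cancel]
  rfl

theorem lintegral_setLAverage_Icc_sub {a b : ℝ} (hab : a < b) {G : ℝ → ℝ≥0∞}
    (hG : AEMeasurable G) :
    ∫⁻ t, ⨍⁻ s in Icc (t - b) (t - a), G s ∂volume = ∫⁻ s, G s := by
  have hc : ENNReal.ofReal (b - a) ≠ 0 := by simpa using hab
  calc ∫⁻ t, ⨍⁻ s in Icc (t - b) (t - a), G s ∂volume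
      = ∫⁻ t, (∫⁻ s in Icc a b, hG.mk G (t - s)) * (ENNReal.ofReal (b - a))⁻¹ := by
        congr with t
        rw [laverage_congr (ae_restrict_of_ae hG.ae_eq_mk), setLAverage_eq, Real.volume_Icc,
          sub_sub_sub_cancel_left, setLIntegral_Icc_sub_eq, div_eq_mul_inv]
    _ = (∫⁻ s in Icc a b, ∫⁻ t, hG.mk G (t - s)) * (ENNReal.ofReal (b - a))⁻¹ := by
        rw [lintegral_mul_const' _ _ (ENNReal.inv_ne_top.2 hc),
          lintegral_lintegral_swap (f := fun t s => hG.mk G (t - s))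
            (hG.measurable_mk.comp measurable_sub).aemeasurable]
    _ = ∫⁻ s, G s := by
        simp_rw [lintegral_sub_right_eq_self]
        rw [setLIntegral_const, Real.volume_Icc, mul_assoc,
          ENNReal.mul_inv_cancel hc ENNReal.ofReal_ne_top, mul_one,
          lintegral_congr_ae hG.ae_eq_mk.symm]

variable {E : Type*} [NormedAddCommGroup E] [NormedSpace ℝ E]

noncomputable def boxKernel (a b t : ℝ) : ℝ :=
  (b - a)⁻¹ * indicator (Icc a b) (fun _ => (1 : ℝ)) t

theorem etaP_eq_boxKernel (h : ℝ) : etaP h = boxKernel (-h) 0 := by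
  ext t; simp [etaP, boxKernel]

theorem etaM_eq_boxKernel (h : ℝ) : etaM h = boxKernel 0 h := by
  ext t; simp [etaM, boxKernel]

theorem boxKernel_sub_smul (a b t s : ℝ) (w : ℝ → E) :
    boxKernel a b (t - s) • w s = (b - a)⁻¹ • indicator (Icc (t - b) (t - a)) w s := by
  have hmem : t - s ∈ Icc a b ↔ s ∈ Icc (t - b) (t - a) := by
    simp only [mem_Icc]; constructor <;> rintro ⟨h₁, h₂⟩ <;> constructor <;> linarith
  simp only [boxKernel, indicator_apply, hmem]
  split_ifs <;> simp

theorem convT_boxKernel {a b : ℝ} (hab : a < b) (w : ℝ → E) (t : ℝ) :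
    convT (boxKernel a b) w t = ⨍ s in Icc (t - b) (t - a), w s := by
  simp_rw [convT, boxKernel_sub_smul, integral_smul, integral_indicator measurableSet_Icc,
    setAverage_eq, Real.volume_real_Icc_of_le (by linarith : t - b ≤ t - a),
    sub_sub_sub_cancel_left]

theorem continuous_convT_boxKernel {a b : ℝ} (hab : a < b) {w : ℝ → E}
    (hw : LocallyIntegrable w) : Continuous (convT (boxKernel a b) w) := by
  have hint : ∀ x y, IntervalIntegrable w volume x y := fun x y =>
    (hw.integrableOn_isCompact isCompact_uIcc).intervalIntegrable
  have hP := intervalIntegral.continuous_primitive hint 0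
  have heq : convT (boxKernel a b) w =
      fun t => (b - a)⁻¹ • ((∫ s in 0..t - a, w s) - ∫ s in 0..t - b, w s) := by
    ext t
    rw [convT_boxKernel hab, setAverage_eq, Real.volume_real_Icc_of_le (by linarith),
      sub_sub_sub_cancel_left, intervalIntegral.integral_interval_sub_left (hint _ _) (hint _ _),
      intervalIntegral.integral_of_le (by linarith), integral_Icc_eq_integral_Ioc]
  rw [heq]
  exact ((hP.comp (continuous_sub_right a)).sub (hP.comp (continuous_sub_right b))).const_smul _

variable [CompleteSpace E] {F : E → ℝ≥0∞}

theorem lintegral_convT_boxKernel_le (hconv : ConvexENN F) (hlsc : LowerSemicontinuous F)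
    {a b : ℝ} (hab : a < b) {w : ℝ → E} (hw : LocallyIntegrable w) :
    ∫⁻ t, F (convT (boxKernel a b) w t) ≤ ∫⁻ t, F (w t) := by
  borelize E
  calc ∫⁻ t, F (convT (boxKernel a b) w t)
      ≤ ∫⁻ t, ⨍⁻ s in Icc (t - b) (t - a), F (w s) ∂volume := lintegral_mono fun t => by
        rw [convT_boxKernel hab]
        exact hconv.map_setAverage_le hlsc (by simp [hab]) measure_Icc_lt_top.ne
          (hw.integrableOn_isCompact isCompact_Icc)
    _ = ∫⁻ t, F (w t) := lintegral_setLAverage_Icc_sub hab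
        (hlsc.measurable.comp_aemeasurable hw.aestronglyMeasurable.aemeasurable)

theorem lintegral_convT_etaM_etaP_le (hconv : ConvexENN F) (hlsc : LowerSemicontinuous F)
    {h : ℝ} (hh : 0 < h) {w : ℝ → E} (hw : LocallyIntegrable w) :
    ∫⁻ t, F (convT (etaM h) (convT (etaP h) w) t) ≤ ∫⁻ t, F (w t) := by
  rw [etaM_eq_boxKernel, etaP_eq_boxKernel]
  have hsmooth := continuous_convT_boxKernel (neg_lt_zero.2 hh) hw
  exact (lintegral_convT_boxKernel_le hconv hlsc hh hsmooth.locallyIntegrable).trans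
    (lintegral_convT_boxKernel_le hconv hlsc (neg_lt_zero.2 hh) hw)

end Steklov

section Regularization

variable {E : Type*} [NormedAddCommGroup E] [NormedSpace ℝ E] {F : E → ℝ≥0∞}

theorem setLIntegral_reg_le [CompleteSpace E] (hconv : ConvexENN F)
    (hlsc : LowerSemicontinuous F) (hF0 : F 0 = 0) {v : ℝ → E} (hv : Integrable v)
    {ξ : ℝ → ℝ} (hξ : Measurable ξ) (hξ01 : ∀ t, ξ t ∈ Icc (0 : ℝ) 1) {s : Set ℝ}
    (hξs : Function.support ξ ⊆ s) {h : ℝ} (hh : 0 < h) :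
    ∫⁻ t in s, F (reg h ξ v t) ≤ ∫⁻ t in s, F (ξ t • v t) := by
  have hw : Integrable (fun t => ξ t • v t) := hv.bdd_smul 1 hξ.aestronglyMeasurable
    (ae_of_all _ fun t => by simpa [abs_of_nonneg (hξ01 t).1] using (hξ01 t).2)
  have hsupp : Function.support (fun t => F (ξ t • v t)) ⊆ s := fun t ht =>
    hξs fun hξt => ht (by simp [hξt, hF0])
  calc ∫⁻ t in s, F (reg h ξ v t)
      ≤ ∫⁻ t in s, F (convT (etaM h) (convT (etaP h) (fun r => ξ r • v r)) t) :=
        lintegral_mono fun t => hconv.apply_smul_le hF0 (hξ01 t) _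
    _ ≤ ∫⁻ t, F (convT (etaM h) (convT (etaP h) (fun r => ξ r • v r)) t) :=
        setLIntegral_le_lintegral _ _
    _ ≤ ∫⁻ t, F (ξ t • v t) := lintegral_convT_etaM_etaP_le hconv hlsc hh hw.locallyIntegrable
    _ = ∫⁻ t in s, F (ξ t • v t) := (setLIntegral_eq_of_support_subset hsupp).symm

theorem tendsto_setLIntegral_cutoff_smul (hconv : ConvexENN F)
    (hlsc : LowerSemicontinuous F) (hF0 : F 0 = 0) {T : ℝ} {v : ℝ → E}
    (hv : AEStronglyMeasurable v (volume.restrict (Icc 0 T)))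
    (hFv : ∫⁻ t in Icc (0 : ℝ) T, F (v t) ≠ ∞) {ξ : ℝ → ℝ → ℝ}
    (hξ : ∀ ε > (0 : ℝ), Measurable (ξ ε)) (hξ01 : ∀ ε > (0 : ℝ), ∀ t, ξ ε t ∈ Icc (0 : ℝ) 1)
    (hξone : ∀ ε > (0 : ℝ), ∀ t ∈ Icc ε (T - ε), ξ ε t = 1) :
    Tendsto (fun ε => ∫⁻ t in Icc (0 : ℝ) T, F (ξ ε t • v t)) (𝓝[>] 0)
      (𝓝 (∫⁻ t in Icc (0 : ℝ) T, F (v t))) := by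
  borelize E
  have hinterior : ∀ᵐ t ∂volume.restrict (Icc 0 T), t ∈ Ioo 0 T := by
    rw [← Measure.restrict_congr_set Ioo_ae_eq_Icc]
    exact ae_restrict_mem measurableSet_Ioo
  refine tendsto_lintegral_filter_of_dominated_convergence' (fun t => F (v t)) ?_ ?_ hFv ?_
  · filter_upwards [self_mem_nhdsWithin] with ε hε
    exact hlsc.measurable.comp_aemeasurable
      ((hξ ε hε).aestronglyMeasurable.smul hv).aemeasurable
  · filter_upwards [self_mem_nhdsWithin] with ε hε
    exact ae_of_all _ fun t => hconv.apply_smul_le hF0 (hξ01 ε hε t) _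
  · filter_upwards [hinterior] with t ⟨ht0, htT⟩
    refine tendsto_const_nhds.congr' ?_
    filter_upwards [Ioo_mem_nhdsGT (lt_min ht0 (sub_pos.2 htT))] with ε ⟨hε, hεt⟩
    rw [hξone ε hε t ⟨(lt_min_iff.1 hεt).1.le, by linarith [(lt_min_iff.1 hεt).2]⟩, one_smul]

end Regularization

theorem stmt10_general {E : Type*} [NormedAddCommGroup E] [InnerProductSpace ℝ E]
    [FiniteDimensional ℝ E]
    (T : ℝ)
    (F : E → ℝ≥0∞) (hconv : ConvexENN F) (hlsc : LowerSemicontinuous F) (hF0 : F 0 = 0)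
    (v : ℝ → E) (hvint : Integrable v)
    (hFint : (∫⁻ t in Set.Icc (0 : ℝ) T, F (v t)) < ∞)
    (ξ : ℝ → ℝ → ℝ)
    (hξcont : ∀ ε > (0 : ℝ), Continuous (ξ ε))
    (hξ01 : ∀ ε > (0 : ℝ), ∀ t, ξ ε t ∈ Set.Icc (0 : ℝ) 1)
    (hξsupp : ∀ ε > (0 : ℝ), Function.support (ξ ε) ⊆ Set.Ioo 0 T)
    (hξone : ∀ ε > (0 : ℝ), ∀ t ∈ Set.Icc ε (T - ε), ξ ε t = 1) :
    (∀ ε > (0 : ℝ), ∀ h > (0 : ℝ),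
        (∫⁻ t in Set.Icc (0 : ℝ) T, F (reg h (ξ ε) v t)) ≤
          ∫⁻ t in Set.Icc (0 : ℝ) T, F (ξ ε t • v t)) ∧
      Tendsto (fun ε => ∫⁻ t in Set.Icc (0 : ℝ) T, F (ξ ε t • v t)) (𝓝[>] 0)
        (𝓝 (∫⁻ t in Set.Icc (0 : ℝ) T, F (v t))) ∧
      Filter.limsup
          (fun ε => ⨆ (h : ℝ) (_ : 0 < h), ∫⁻ t in Set.Icc (0 : ℝ) T, F (reg h (ξ ε) v t))
          (𝓝[>] (0 : ℝ)) ≤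
        ∫⁻ t in Set.Icc (0 : ℝ) T, F (v t) := by
  have hreg : ∀ ε > (0 : ℝ), ∀ h > (0 : ℝ), (∫⁻ t in Icc (0 : ℝ) T, F (reg h (ξ ε) v t)) ≤
      ∫⁻ t in Icc (0 : ℝ) T, F (ξ ε t • v t) := fun ε hε h hh =>
    setLIntegral_reg_le hconv hlsc hF0 hvint (hξcont ε hε).measurable (hξ01 ε hε)
      ((hξsupp ε hε).trans Ioo_subset_Icc_self) hh
  have hlim := tendsto_setLIntegral_cutoff_smul hconv hlsc hF0 hvint.1.restrict
    hFint.ne (fun ε hε => (hξcont ε hε).measurable) hξ01 hξone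
  refine ⟨hreg, hlim, ?_⟩
  calc limsup (fun ε => ⨆ (h : ℝ) (_ : 0 < h), ∫⁻ t in Icc (0 : ℝ) T, F (reg h (ξ ε) v t))
        (𝓝[>] (0 : ℝ))
      ≤ limsup (fun ε => ∫⁻ t in Icc (0 : ℝ) T, F (ξ ε t • v t)) (𝓝[>] 0) :=
        limsup_le_limsup (eventually_nhdsWithin_of_forall fun ε hε => iSup₂_le (hreg ε hε))
    _ = ∫⁻ t in Icc (0 : ℝ) T, F (v t) := hlim.limsup_eq

/-- **Regularization in time via Steklov averages.**  For convex lsc `F : E → [0, ∞]` with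
`F(0) = 0` and `v : ℝ → E` Bochner integrable, supported in `[0, T]`, with
`∫₀^T F(v) dt < ∞`, and cut-offs `ξ_ε` as described:
(i) `∫₀^T F([v]_{h,ε}) dt ≤ ∫₀^T F(ξ_ε v) dt` for all `h, ε > 0`;
(ii) `∫₀^T F(ξ_ε v) dt → ∫₀^T F(v) dt` as `ε → 0⁺`;
consequently `limsup_{ε→0⁺} sup_{h>0} ∫₀^T F([v]_{h,ε}) dt ≤ ∫₀^T F(v) dt`. -/
theorem stmt10 {E : Type*} [NormedAddCommGroup E] [InnerProductSpace ℝ E]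
    [FiniteDimensional ℝ E]
    (T : ℝ) (hT : 0 < T)
    (F : E → ℝ≥0∞) (hconv : ConvexENN F) (hlsc : LowerSemicontinuous F) (hF0 : F 0 = 0)
    (v : ℝ → E) (hvint : Integrable v)
    (hsupp : ∀ t : ℝ, t ∉ Set.Icc 0 T → v t = 0)
    (hFint : (∫⁻ t in Set.Icc (0 : ℝ) T, F (v t)) < ∞)
    (ξ : ℝ → ℝ → ℝ)
    (hξcont : ∀ ε > (0 : ℝ), Continuous (ξ ε))
    (hξ01 : ∀ ε > (0 : ℝ), ∀ t, ξ ε t ∈ Set.Icc (0 : ℝ) 1)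
    (hξsupp : ∀ ε > (0 : ℝ), Function.support (ξ ε) ⊆ Set.Ioo 0 T)
    (hξone : ∀ ε > (0 : ℝ), ∀ t ∈ Set.Icc ε (T - ε), ξ ε t = 1) :
    (∀ ε > (0 : ℝ), ∀ h > (0 : ℝ),
        (∫⁻ t in Set.Icc (0 : ℝ) T, F (reg h (ξ ε) v t)) ≤
          ∫⁻ t in Set.Icc (0 : ℝ) T, F (ξ ε t • v t)) ∧
      Tendsto (fun ε => ∫⁻ t in Set.Icc (0 : ℝ) T, F (ξ ε t • v t)) (𝓝[>] 0)
        (𝓝 (∫⁻ t in Set.Icc (0 : ℝ) T, F (v t))) ∧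
      Filter.limsup
          (fun ε => ⨆ (h : ℝ) (_ : 0 < h), ∫⁻ t in Set.Icc (0 : ℝ) T, F (reg h (ξ ε) v t))
          (𝓝[>] (0 : ℝ)) ≤
        ∫⁻ t in Set.Icc (0 : ℝ) T, F (v t) :=
  stmt10_general T F hconv hlsc hF0 v hvint hFint ξ hξcont hξ01 hξsupp hξone
end

section
/- Let (X, μ) be a finite measure space and F : ℝ^m → [0,∞] (extended nonnegative reals) convex and lower semicontinuous. Let v_n, v ∈ L²(μ; ℝ^m) and suppose v_n converges to v weakly in L², i.e. ∫_X ⟨v_n(x), g(x)⟩ dμ(x) → ∫_X ⟨v(x), g(x)⟩ dμ(x) for every g ∈ L²(μ; ℝ^m). Then liminf_{n→∞} ∫_X F(v_n(x)) dμ(x) ≥ ∫_X F(v(x)) dμ(x). -/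
/-!
The integral functional `f ↦ ∫⁻ F ∘ f` is convex on `L²`, and it is lower semicontinuous for the
norm topology by Fatou's lemma along an a.e. convergent subsequence; so its sublevel sets are closed
and convex. A closed convex set `K` in a Hilbert space is weakly sequentially closed: if `uₙ ∈ K`
converge weakly to `x` and `p` is the projection of `x` onto `K`, then `⟪x - p, uₙ - p⟫ ≤ 0` passes
to the limit as `‖x - p‖² ≤ 0`. For any `c` above the `liminf`, a subsequence of `vₙ` lies in the
sublevel set `{∫⁻ F ∘ f ≤ c}`, hence so does its weak limit `w`.
-/

open MeasureTheory Filter Topology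
open scoped ENNReal RealInnerProductSpace

theorem ConvexENN.convex_setOf_le {E : Type*} [AddCommMonoid E] [Module ℝ E] {G : E → ℝ≥0∞}
    (hG : ConvexENN G) (c : ℝ≥0∞) : Convex ℝ {x | G x ≤ c} := by
  intro x hx y hy a b ha hb hab
  calc G (a • x + b • y) ≤ ENNReal.ofReal a * G x + ENNReal.ofReal b * G y :=
        hG x y a b ha hb hab
    _ ≤ ENNReal.ofReal a * c + ENNReal.ofReal b * c := by gcongr <;> assumption
    _ = c := by rw [← add_mul, ← ENNReal.ofReal_add ha hb, hab, ENNReal.ofReal_one, one_mul]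

section Hilbert

variable {E : Type*} [NormedAddCommGroup E] [InnerProductSpace ℝ E] [CompleteSpace E]

theorem IsClosed.mem_of_tendsto_inner {K : Set E} (hK : IsClosed K) (hKc : Convex ℝ K)
    {u : ℕ → E} {x : E} (huK : ∀ n, u n ∈ K)
    (hux : ∀ y, Tendsto (fun n => ⟪u n, y⟫) atTop (𝓝 ⟪x, y⟫)) : x ∈ K := by
  obtain ⟨p, hpK, hp⟩ :=
    exists_norm_eq_iInf_of_complete_convex ⟨u 0, huK 0⟩ hK.isComplete hKc x
  have hproj := (norm_eq_iInf_iff_real_inner_le_zero hKc hpK).mp hp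
  have hlim : ⟪x - p, x - p⟫ ≤ 0 := by
    rw [inner_sub_left]
    refine le_of_tendsto ((hux (x - p)).sub_const ⟪p, x - p⟫) (Eventually.of_forall fun n => ?_)
    have hn := hproj (u n) (huK n)
    rwa [real_inner_comm, inner_sub_left] at hn
  rwa [← sub_eq_zero.mp (real_inner_self_nonpos.mp hlim)] at hpK

theorem ConvexENN.le_liminf_of_tendsto_inner {G : E → ℝ≥0∞} (hG : ConvexENN G)
    (hGlsc : LowerSemicontinuous G) {u : ℕ → E} {x : E}
    (hux : ∀ y, Tendsto (fun n => ⟪u n, y⟫) atTop (𝓝 ⟪x, y⟫)) :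
    G x ≤ liminf (fun n => G (u n)) atTop := by
  refine le_of_forall_gt_imp_ge_of_dense fun c hc => ?_
  obtain ⟨φ, hφ, hφc⟩ :=
    extraction_of_frequently_atTop (frequently_lt_of_liminf_lt (by isBoundedDefault) hc)
  exact (hGlsc.isClosed_preimage c).mem_of_tendsto_inner (hG.convex_setOf_le c)
    (fun n => (hφc n).le) fun y => (hux y).comp hφ.tendsto_atTop

end Hilbert

section Lp

variable {X E : Type*} [MeasurableSpace X] {μ : Measure X} [NormedAddCommGroup E] {p : ℝ≥0∞}
  {F : E → ℝ≥0∞}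

theorem MemLp.lintegral_comp_toLp {f : X → E} (hf : MemLp f p μ) :
    ∫⁻ x, F (hf.toLp f x) ∂μ = ∫⁻ x, F (f x) ∂μ :=
  lintegral_congr_ae (hf.coeFn_toLp.fun_comp F)

variable [MeasurableSpace E] [BorelSpace E]

theorem ConvexENN.lintegral_comp_Lp [NormedSpace ℝ E] (hF : ConvexENN F) (hFm : Measurable F) :
    ConvexENN fun f : Lp E p μ => ∫⁻ x, F (f x) ∂μ := by
  intro f g a b ha hb hab
  have hm : ∀ f : Lp E p μ, AEMeasurable (fun x => F (f x)) μ := fun f =>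
    hFm.comp_aemeasurable (Lp.aestronglyMeasurable f).aemeasurable
  calc ∫⁻ x, F ((a • f + b • g : Lp E p μ) x) ∂μ = ∫⁻ x, F (a • f x + b • g x) ∂μ := by
        refine lintegral_congr_ae ?_
        filter_upwards [Lp.coeFn_add (a • f) (b • g), Lp.coeFn_smul a f,
          Lp.coeFn_smul b g] with x hadd hf hg
        rw [hadd, Pi.add_apply, hf, hg, Pi.smul_apply, Pi.smul_apply]
    _ ≤ ∫⁻ x, ENNReal.ofReal a * F (f x) + ENNReal.ofReal b * F (g x) ∂μ :=
        lintegral_mono fun x => hF _ _ a b ha hb hab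
    _ = _ := by
        rw [lintegral_add_left' ((hm f).const_mul _), lintegral_const_mul'' _ (hm f),
          lintegral_const_mul'' _ (hm g)]

theorem LowerSemicontinuous.lintegral_comp_Lp [Fact (1 ≤ p)] (hF : LowerSemicontinuous F) :
    LowerSemicontinuous fun f : Lp E p μ => ∫⁻ x, F (f x) ∂μ := by
  refine lowerSemicontinuous_iff_isClosed_preimage.mpr fun c => IsSeqClosed.isClosed ?_
  intro f g hfc hfg
  obtain ⟨ns, -, hae⟩ := (tendstoInMeasure_of_tendsto_Lp hfg).exists_seq_tendsto_ae
  calc ∫⁻ x, F (g x) ∂μ ≤ ∫⁻ x, liminf (fun k => F (f (ns k) x)) atTop ∂μ := by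
        refine lintegral_mono_ae ?_
        filter_upwards [hae] with x hx
        exact (le_liminf_iff).mpr fun b hb => hx.eventually (hF (g x) b hb)
    _ ≤ liminf (fun k => ∫⁻ x, F (f (ns k) x) ∂μ) atTop :=
        lintegral_liminf_le' fun k =>
          hF.measurable.comp_aemeasurable (Lp.aestronglyMeasurable _).aemeasurable
    _ ≤ c := liminf_le_of_frequently_le' (Frequently.of_forall fun k => hfc (ns k))

end Lp

theorem MemLp.inner_toLp_eq_integral {X E : Type*} [MeasurableSpace X] {μ : Measure X}
    [NormedAddCommGroup E] [InnerProductSpace ℝ E] {f : X → E} (hf : MemLp f 2 μ)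
    (g : Lp E 2 μ) : ⟪hf.toLp f, g⟫ = ∫ x, ⟪f x, g x⟫ ∂μ := by
  rw [L2.inner_def]
  exact integral_congr_ae (hf.coeFn_toLp.mono fun x hx => congrArg (⟪·, g x⟫) hx)

theorem stmt11_general {X : Type*} [MeasurableSpace X] (μ : Measure X)
    (m : ℕ) (F : EuclideanSpace ℝ (Fin m) → ℝ≥0∞)
    (hconv : ConvexENN F) (hlsc : LowerSemicontinuous F)
    (v : ℕ → X → EuclideanSpace ℝ (Fin m)) (w : X → EuclideanSpace ℝ (Fin m))
    (hv : ∀ n, MemLp (v n) 2 μ) (hw : MemLp w 2 μ)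
    (hweak : ∀ g : X → EuclideanSpace ℝ (Fin m), MemLp g 2 μ →
      Tendsto (fun n => ∫ x, ⟪v n x, g x⟫ ∂μ) atTop (𝓝 (∫ x, ⟪w x, g x⟫ ∂μ))) :
    (∫⁻ x, F (w x) ∂μ) ≤ liminf (fun n => ∫⁻ x, F (v n x) ∂μ) atTop := by
  have hweakLp : ∀ g : Lp (EuclideanSpace ℝ (Fin m)) 2 μ,
      Tendsto (fun n => ⟪(hv n).toLp (v n), g⟫) atTop (𝓝 ⟪hw.toLp w, g⟫) := fun g => by
    simpa only [MemLp.inner_toLp_eq_integral] using hweak g (Lp.memLp g)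
  simpa only [MemLp.lintegral_comp_toLp] using
    (hconv.lintegral_comp_Lp hlsc.measurable).le_liminf_of_tendsto_inner
      hlsc.lintegral_comp_Lp hweakLp

/-- **Weak lower semicontinuity of convex integral functionals.**  On a finite measure space,
if `F : ℝ^m → [0, ∞]` is convex and lower semicontinuous and `v_n → v` weakly in
`L²(μ; ℝ^m)`, then `liminf_n ∫ F(v_n) dμ ≥ ∫ F(v) dμ`. -/
theorem stmt11 {X : Type*} [MeasurableSpace X] (μ : Measure X) [IsFiniteMeasure μ]
    (m : ℕ) (F : EuclideanSpace ℝ (Fin m) → ℝ≥0∞)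
    (hconv : ConvexENN F) (hlsc : LowerSemicontinuous F)
    (v : ℕ → X → EuclideanSpace ℝ (Fin m)) (w : X → EuclideanSpace ℝ (Fin m))
    (hv : ∀ n, MemLp (v n) 2 μ) (hw : MemLp w 2 μ)
    (hweak : ∀ g : X → EuclideanSpace ℝ (Fin m), MemLp g 2 μ →
      Tendsto (fun n => ∫ x, ⟪v n x, g x⟫ ∂μ) atTop (𝓝 (∫ x, ⟪w x, g x⟫ ∂μ))) :
    (∫⁻ x, F (w x) ∂μ) ≤ liminf (fun n => ∫⁻ x, F (v n x) ∂μ) atTop :=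
  stmt11_general μ m F hconv hlsc v w hv hw hweak
end

section
/- Let (X, μ) be a measure space, E a finite-dimensional real inner product space, and F₁, F₂ : E → [0,∞] (extended nonnegative reals) convex, lower semicontinuous, with F₁(0) = F₂(0) = 0, with Moreau–Yosida regularizations F_i^ε(x) = inf_{y ∈ E} (‖y − x‖²/(2ε) + F_i(y)). Let χ_n : X → [0,1] be measurable with χ_n → χ μ-almost everywhere, let v_n : X → E be measurable with v_n → v μ-almost everywhere, and let ε_n → 0 be positive. Then liminf_{n→∞} ∫_X ( χ_n·F₁^{ε_n}(v_n) + (1 − χ_n)·F₂^{ε_n}(v_n) ) dμ ≥ ∫_X ( χ·F₁(v) + (1 − χ)·F₂(v) ) dμ. -/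
open MeasureTheory Filter Topology
open scoped ENNReal

/-- The Moreau–Yosida regularization `F^ε(x) = inf_y (‖y − x‖²/(2ε) + F(y))`. -/
noncomputable def MY {E : Type*} [NormedAddCommGroup E] (F : E → ℝ≥0∞) (ε : ℝ) (x : E) : ℝ≥0∞ :=
  ⨅ y : E, ENNReal.ofReal (‖y - x‖ ^ 2 / (2 * ε)) + F y

/-- The Moreau–Yosida regularization is upper semicontinuous (as an inf of continuous
functions of `x`). -/
lemma MY_usc {E : Type*} [NormedAddCommGroup E] (F : E → ℝ≥0∞) (ε : ℝ) :
    UpperSemicontinuous (MY F ε) := by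
  apply upperSemicontinuous_iInf
  intro y
  apply Continuous.upperSemicontinuous
  have h1 : Continuous fun x : E => ‖y - x‖ ^ 2 / (2 * ε) :=
    ((continuous_const.sub continuous_id).norm.pow 2).div_const _
  exact (ENNReal.continuous_ofReal.comp h1).add continuous_const

/-- Liminf lower bound for Moreau–Yosida approximations along converging sequences. -/
lemma le_liminf_MY {E : Type*} [NormedAddCommGroup E] {F : E → ℝ≥0∞}
    (hl : LowerSemicontinuous F)
    {x : E} {xs : ℕ → E} (hx : Tendsto xs atTop (𝓝 x))
    {ε : ℕ → ℝ} (hε : ∀ n, 0 < ε n) (hε0 : Tendsto ε atTop (𝓝 0)) :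
    F x ≤ liminf (fun n => MY F (ε n) (xs n)) atTop := by
  by_contra h
  push_neg at h
  obtain ⟨c, hc1, hc2⟩ := exists_between h
  have hcT : c ≠ ⊤ := hc2.ne_top
  set C := c.toReal with hC
  have hC0 : 0 ≤ C := ENNReal.toReal_nonneg
  -- lower semicontinuity at x
  have hLSC : ∀ᶠ z in 𝓝 x, c < F z := hl x c hc2
  obtain ⟨δ, hδ, hball⟩ := Metric.eventually_nhds_iff_ball.mp hLSC
  -- frequently the MY value is below c
  have hfreq : ∃ᶠ n in atTop, MY F (ε n) (xs n) < c :=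
    frequently_lt_of_liminf_lt (by isBoundedDefault) hc1
  -- eventually the sequence is close and ε is small
  have hev1 : ∀ᶠ n in atTop, dist (xs n) x < δ / 2 :=
    (Metric.tendsto_nhds.mp hx) _ (by positivity)
  have hev2 : ∀ᶠ n in atTop, ε n < δ ^ 2 / (8 * (C + 1)) := by
    have := Metric.tendsto_nhds.mp hε0 (δ ^ 2 / (8 * (C + 1))) (by positivity)
    filter_upwards [this] with n hn
    calc ε n ≤ |ε n - 0| := by rw [sub_zero]; exact le_abs_self _
    _ < _ := by rwa [Real.dist_eq] at hn
  obtain ⟨n, hn, hn1, hn2⟩ := (hfreq.and_eventually (hev1.and hev2)).exists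
  -- extract a near-minimizer
  rw [MY, iInf_lt_iff] at hn
  obtain ⟨y, hy⟩ := hn
  have hFy : F y < c := lt_of_le_of_lt (le_add_self) hy
  have hq : ENNReal.ofReal (‖y - xs n‖ ^ 2 / (2 * ε n)) < c :=
    lt_of_le_of_lt (le_add_right le_rfl) hy
  have hεn := hε n
  have hq' : ‖y - xs n‖ ^ 2 / (2 * ε n) < C := by
    rw [ENNReal.ofReal_lt_iff_lt_toReal
      (div_nonneg (by positivity) (by linarith)) hcT] at hq
    exact hq
  have hnorm2 : ‖y - xs n‖ ^ 2 < (δ / 2) ^ 2 := by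
    have h1 : ‖y - xs n‖ ^ 2 < C * (2 * ε n) := by
      rwa [div_lt_iff₀ (by linarith)] at hq'
    have h2 : ε n * (C + 1) < δ ^ 2 / (8 * (C + 1)) * (C + 1) :=
      mul_lt_mul_of_pos_right hn2 (by linarith)
    have h3 : δ ^ 2 / (8 * (C + 1)) * (C + 1) = δ ^ 2 / 8 := by
      field_simp
    nlinarith
  have hnorm : ‖y - xs n‖ < δ / 2 :=
    lt_of_pow_lt_pow_left₀ 2 (by positivity) hnorm2
  have hyx : dist y x < δ := by
    calc dist y x ≤ dist y (xs n) + dist (xs n) x := dist_triangle _ _ _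
    _ < δ / 2 + δ / 2 := by
        apply add_lt_add _ hn1
        rwa [dist_eq_norm]
    _ = δ := by ring
  exact absurd hFy (not_lt.mpr (hball y hyx).le)

/-- Superadditivity of liminf in `ℝ≥0∞`. -/
lemma ennreal_le_liminf_add {α : Type*} {f : Filter α} {u v : α → ℝ≥0∞} :
    liminf u f + liminf v f ≤ liminf (fun n => u n + v n) f := by
  rcases eq_or_ne (liminf u f) 0 with h | h
  · rw [h, zero_add]
    exact liminf_le_liminf (Eventually.of_forall fun n => le_add_self)
  rcases eq_or_ne (liminf v f) 0 with h' | h'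
  · rw [h', add_zero]
    exact liminf_le_liminf (Eventually.of_forall fun n => le_add_right le_rfl)
  refine (le_liminf_iff (by isBoundedDefault) (by isBoundedDefault)).2 fun c hc => ?_
  obtain ⟨a, ha, b, hb, hab⟩ := ENNReal.exists_lt_add_of_lt_add hc h h'
  filter_upwards [eventually_lt_of_lt_liminf ha, eventually_lt_of_lt_liminf hb] with n h1 h2
  exact hab.trans_le (add_le_add h1.le h2.le)

/-- Liminf lower bound for a product where one factor converges. -/
lemma ennreal_tendsto_mul_le_liminf {a b : ℕ → ℝ≥0∞} {A B : ℝ≥0∞}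
    (ha : Tendsto a atTop (𝓝 A)) (hb : B ≤ liminf b atTop) :
    A * B ≤ liminf (fun n => a n * b n) atTop := by
  have h1 : A * B ≤ liminf a atTop * liminf b atTop := by
    rw [ha.liminf_eq]
    exact mul_le_mul_right hb A
  exact h1.trans ENNReal.le_liminf_mul

/-- Liminf (Fatou-type) bound for Moreau–Yosida approximations along a.e. converging
sequences: if `χ_n → χ` a.e. with `0 ≤ χ_n ≤ 1`, `v_n → v` a.e., and `ε_n → 0⁺`, then
`liminf_n ∫ (χ_n F₁^{ε_n}(v_n) + (1 − χ_n) F₂^{ε_n}(v_n)) dμ ≥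
  ∫ (χ F₁(v) + (1 − χ) F₂(v)) dμ`. -/
theorem stmt13 {X : Type*} [MeasurableSpace X] (μ : Measure X)
    {E : Type*} [NormedAddCommGroup E] [InnerProductSpace ℝ E] [FiniteDimensional ℝ E]
    [MeasurableSpace E] [BorelSpace E]
    (F₁ F₂ : E → ℝ≥0∞)
    (hc₁ : ConvexENN F₁) (hc₂ : ConvexENN F₂)
    (hl₁ : LowerSemicontinuous F₁) (hl₂ : LowerSemicontinuous F₂)
    (h₁0 : F₁ 0 = 0) (h₂0 : F₂ 0 = 0)
    (χn : ℕ → X → ℝ) (χ : X → ℝ)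
    (hχmeas : ∀ n, Measurable (χn n))
    (hχ01 : ∀ n x, χn n x ∈ Set.Icc (0 : ℝ) 1)
    (hχae : ∀ᵐ x ∂μ, Tendsto (fun n => χn n x) atTop (𝓝 (χ x)))
    (vn : ℕ → X → E) (v : X → E)
    (hvmeas : ∀ n, Measurable (vn n))
    (hvae : ∀ᵐ x ∂μ, Tendsto (fun n => vn n x) atTop (𝓝 (v x)))
    (ε : ℕ → ℝ) (hε : ∀ n, 0 < ε n) (hε0 : Tendsto ε atTop (𝓝 0)) :
    (∫⁻ x, (ENNReal.ofReal (χ x) * F₁ (v x) + ENNReal.ofReal (1 - χ x) * F₂ (v x)) ∂μ) ≤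
      liminf
        (fun n => ∫⁻ x,
          (ENNReal.ofReal (χn n x) * MY F₁ (ε n) (vn n x) +
            ENNReal.ofReal (1 - χn n x) * MY F₂ (ε n) (vn n x)) ∂μ) atTop := by
  set f : ℕ → X → ℝ≥0∞ := fun n x =>
    ENNReal.ofReal (χn n x) * MY F₁ (ε n) (vn n x) +
      ENNReal.ofReal (1 - χn n x) * MY F₂ (ε n) (vn n x) with hf
  have hmeas : ∀ n, Measurable (f n) := by
    intro n
    apply Measurable.add
    · exact (ENNReal.measurable_ofReal.comp (hχmeas n)).mul
        (((MY_usc F₁ (ε n)).measurable).comp (hvmeas n))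
    · exact (ENNReal.measurable_ofReal.comp ((measurable_const.sub (hχmeas n)))).mul
        (((MY_usc F₂ (ε n)).measurable).comp (hvmeas n))
  calc (∫⁻ x, (ENNReal.ofReal (χ x) * F₁ (v x) + ENNReal.ofReal (1 - χ x) * F₂ (v x)) ∂μ)
      ≤ ∫⁻ x, liminf (fun n => f n x) atTop ∂μ := by
        apply lintegral_mono_ae
        filter_upwards [hχae, hvae] with x hχx hvx
        have hT1 : Tendsto (fun n => ENNReal.ofReal (χn n x)) atTop
            (𝓝 (ENNReal.ofReal (χ x))) :=
          (ENNReal.continuous_ofReal.tendsto _).comp hχx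
        have hT2 : Tendsto (fun n => ENNReal.ofReal (1 - χn n x)) atTop
            (𝓝 (ENNReal.ofReal (1 - χ x))) :=
          (ENNReal.continuous_ofReal.tendsto _).comp (tendsto_const_nhds.sub hχx)
        have hB1 : F₁ (v x) ≤ liminf (fun n => MY F₁ (ε n) (vn n x)) atTop :=
          le_liminf_MY hl₁ hvx hε hε0
        have hB2 : F₂ (v x) ≤ liminf (fun n => MY F₂ (ε n) (vn n x)) atTop :=
          le_liminf_MY hl₂ hvx hε hε0
        calc ENNReal.ofReal (χ x) * F₁ (v x) + ENNReal.ofReal (1 - χ x) * F₂ (v x)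
            ≤ liminf (fun n => ENNReal.ofReal (χn n x) * MY F₁ (ε n) (vn n x)) atTop +
              liminf (fun n => ENNReal.ofReal (1 - χn n x) * MY F₂ (ε n) (vn n x)) atTop :=
              add_le_add (ennreal_tendsto_mul_le_liminf hT1 hB1)
                (ennreal_tendsto_mul_le_liminf hT2 hB2)
          _ ≤ liminf (fun n => f n x) atTop := ennreal_le_liminf_add
    _ ≤ liminf (fun n => ∫⁻ x, f n x ∂μ) atTop := lintegral_liminf_le hmeas
end
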